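/- Let R be a commutative ring, U(v) = v − 2η, Q, h̃ : ℂ → R with Q(v) invertible, satisfying the N-periodicity Q(Uᴺv) = Q(v), h̃(Uᴺv) = h̃(v), and the T⁽ᴶ⁾Q-formula T⁽ᴶ⁾(v) = Q(U⁻¹v)Q(Uᴶ⁻¹v)·Σ_{k=0}^{J−1} h̃(Uᵏ⁻¹v)^L Q(Uᵏ⁻¹v)⁻¹Q(Uᵏv)⁻¹ for 0 ≤ J ≤ N. Let C : ℂ → ℂ satisfy C∘U = U∘C and let M₀ ∈ R be invertible. If T⁽ᴺ⁾(Uw) = M₀⁻¹·Q(Cw)·Q(w) for all w ∈ ℂ, then for all 0 ≤ J ≤ N and all v ∈ ℂ: T⁽ᴶ⁾(Uv) + T⁽ᴺ⁻ᴶ⁾(U^{J+1}v) = M₀⁻¹·Q(CUᴶv)·Q(v). -/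

import Mathlib

/-!
At `Uv` the `T⁽ᴶ⁾Q`-formula reads `T⁽ᴶ⁾(Uv) = Q(v) Q(Uᴶv) ∑_{k<J} f_v(k)` with
`f_v(k) = h̃(Uᵏv)ᴸ Q(Uᵏv)⁻¹ Q(Uᵏ⁺¹v)⁻¹`, and `f_{Uʲv}(k) = f_v(j + k)` is `N`-periodic in `k`.
Hence `T⁽ᴶ⁾(Uv) + T⁽ᴺ⁻ᴶ⁾(U^{J+1}v)` is `Q(v) Q(Uᴶv)` times a full period sum, while
`T⁽ᴺ⁾(U·Uᴶv)` is `Q(Uᴶv)²` times the same sum. Cancelling one unit `Q(Uᴶv)` and inserting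
the `N`th relation at `Uᴶv` gives the claim.
-/

open Finset

theorem Function.Periodic.sum_range_add_left {M : Type*} [AddCancelCommMonoid M] {f : ℕ → M}
    {N : ℕ} (hf : Function.Periodic f N) (j : ℕ) :
    ∑ k ∈ range N, f (j + k) = ∑ k ∈ range N, f k := by
  induction j with
  | zero => simp only [zero_add]
  | succ j ih =>
    have hsplit := (sum_range_succ' (fun k => f (j + k)) N).symm.trans
      (sum_range_succ (fun k => f (j + k)) N)
    rw [add_zero, hf j] at hsplit
    rw [← ih, ← add_right_cancel hsplit]
    simp only [add_assoc, add_comm 1]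

namespace EightVertex

variable {R : Type*} [CommRing R] (η : ℂ) (L : ℕ) (Q : ℂ → Rˣ) (htil : ℂ → R)

def fusionTerm (v : ℂ) (k : ℕ) : R :=
  htil (v - 2*(k : ℂ)*η) ^ L * ((Q (v - 2*(k : ℂ)*η))⁻¹ : Rˣ) *
    ((Q (v - 2*((k : ℂ) + 1)*η))⁻¹ : Rˣ)

theorem fusionTerm_sub (v : ℂ) (j k : ℕ) :
    fusionTerm η L Q htil (v - 2*(j : ℂ)*η) k = fusionTerm η L Q htil v (j + k) := by
  simp only [fusionTerm, Nat.cast_add]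
  rw [show v - 2*(j : ℂ)*η - 2*(k : ℂ)*η = v - 2*((j : ℂ) + k)*η by ring,
    show v - 2*(j : ℂ)*η - 2*((k : ℂ) + 1)*η = v - 2*((j : ℂ) + k + 1)*η by ring]

theorem fusionTerm_periodic {N : ℕ} (hQper : ∀ v : ℂ, Q (v - 2*(N : ℂ)*η) = Q v)
    (hhper : ∀ v : ℂ, htil (v - 2*(N : ℂ)*η) = htil v) (v : ℂ) :
    Function.Periodic (fusionTerm η L Q htil v) N := fun k => by
  simp only [fusionTerm, Nat.cast_add]
  rw [show v - 2*((k : ℂ) + N)*η = v - 2*(k : ℂ)*η - 2*(N : ℂ)*η by ring,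
    show v - 2*((k : ℂ) + N + 1)*η = v - 2*((k : ℂ) + 1)*η - 2*(N : ℂ)*η by ring,
    hQper, hQper, hhper]

variable {η L Q htil}

theorem Tf_sub_eq_sum_fusionTerm {N : ℕ} {Tf : ℕ → ℂ → R}
    (hfus : ∀ J : ℕ, J ≤ N → ∀ v : ℂ,
      Tf J v = (Q (v + 2*η) : R) * (Q (v - 2*((J : ℂ) - 1)*η) : R) *
        ∑ k ∈ range J, htil (v - 2*((k : ℂ) - 1)*η) ^ L *
          ((Q (v - 2*((k : ℂ) - 1)*η))⁻¹ : Rˣ) * ((Q (v - 2*(k : ℂ)*η))⁻¹ : Rˣ))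
    {J : ℕ} (hJ : J ≤ N) (v : ℂ) :
    Tf J (v - 2*η) = (Q v : R) * (Q (v - 2*(J : ℂ)*η) : R) *
      ∑ k ∈ range J, fusionTerm η L Q htil v k := by
  rw [hfus J hJ, sub_add_cancel,
    show v - 2*η - 2*((J : ℂ) - 1)*η = v - 2*(J : ℂ)*η by ring]
  refine congrArg _ (sum_congr rfl fun k _ => ?_)
  rw [fusionTerm, show v - 2*η - 2*((k : ℂ) - 1)*η = v - 2*(k : ℂ)*η by ring,
    show v - 2*η - 2*(k : ℂ)*η = v - 2*((k : ℂ) + 1)*η by ring]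

end EightVertex

open EightVertex in
theorem eightVertex_QQN_implies_QQ_family {R : Type*} [CommRing R] (η : ℂ) (L N : ℕ)
    (Q : ℂ → Rˣ) (htil : ℂ → R) (Tf : ℕ → ℂ → R)
    (hfus : ∀ J : ℕ, J ≤ N → ∀ v : ℂ,
      Tf J v = (Q (v + 2*η) : R) * (Q (v - 2*((J : ℂ) - 1)*η) : R) *
        ∑ k ∈ range J, htil (v - 2*((k : ℂ) - 1)*η) ^ L *
          ((Q (v - 2*((k : ℂ) - 1)*η))⁻¹ : Rˣ) * ((Q (v - 2*(k : ℂ)*η))⁻¹ : Rˣ))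
    (hQper : ∀ v : ℂ, Q (v - 2*(N : ℂ)*η) = Q v)
    (hhper : ∀ v : ℂ, htil (v - 2*(N : ℂ)*η) = htil v)
    (C : ℂ → ℂ)
    (M₀ : Rˣ)
    (hQQN : ∀ w : ℂ, Tf N (w - 2*η) = ((M₀⁻¹ : Rˣ) : R) * (Q (C w) : R) * (Q w : R)) :
    ∀ J : ℕ, J ≤ N → ∀ v : ℂ,
      Tf J (v - 2*η) + Tf (N - J) (v - 2*((J : ℂ) + 1)*η)
        = ((M₀⁻¹ : Rˣ) : R) * (Q (C (v - 2*(J : ℂ)*η)) : R) * (Q v : R) := by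
  intro J hJ v
  set w := v - 2*(J : ℂ)*η
  set f := fusionTerm η L Q htil v
  have hsum : ∑ k ∈ range N, fusionTerm η L Q htil w k
      = ∑ k ∈ range J, f k + ∑ k ∈ range (N - J), f (J + k) := by
    simp only [w, f, fusionTerm_sub,
      (fusionTerm_periodic η L Q htil hQper hhper v).sum_range_add_left]
    rw [← sum_range_add, Nat.add_sub_cancel' hJ]
  have hTN : Tf N (w - 2*η)
      = (Q w : R) * (Q w : R) * ∑ k ∈ range N, fusionTerm η L Q htil w k := by
    rw [Tf_sub_eq_sum_fusionTerm hfus le_rfl, hQper]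
  have hlhs : Tf J (v - 2*η) + Tf (N - J) (v - 2*((J : ℂ) + 1)*η)
      = (Q v : R) * (Q w : R) * ∑ k ∈ range N, fusionTerm η L Q htil w k := by
    have hw : w - 2*((N - J : ℕ) : ℂ)*η = v - 2*(N : ℂ)*η := by
      simp only [w, Nat.cast_sub hJ]; ring
    rw [show v - 2*((J : ℂ) + 1)*η = w - 2*η by ring, Tf_sub_eq_sum_fusionTerm hfus hJ,
      Tf_sub_eq_sum_fusionTerm hfus (Nat.sub_le N J), hw, hQper, hsum]
    simp only [w, f, fusionTerm_sub]
    ring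
  have hcancel : (Q w : R) * ∑ k ∈ range N, fusionTerm η L Q htil w k
      = ((M₀⁻¹ : Rˣ) : R) * (Q (C w) : R) := by
    apply (Q w).isUnit.mul_right_cancel
    rw [← hQQN w, hTN]
    ring
  rw [hlhs, mul_assoc, hcancel, mul_comm]
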